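/- Let N ∈ ℕ and b : ℕ → ℝ be a finite sequence of real numbers (representing the values of the Lie derivatives L^0 B(x), ..., L^N B(x) at a fixed point x). Then the following two conditions are equivalent: (1) b 0 ≤ 0 implies that either there exists i ≤ N with b j = 0 for all j < i and b i < 0, or b i = 0 for all i ≤ N; (2) for every i with 1 ≤ i ≤ N, if b j = 0 for all j < i then b i ≤ 0. -/
import Mathlib


theorem lie_consecution_equiv (N : ℕ) (b : ℕ → ℝ) :
    (b 0 ≤ 0 →
      (∃ i ≤ N, (∀ j < i, b j = 0) ∧ b i < 0) ∨ (∀ i ≤ N, b i = 0)) ↔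
    (∀ i, 1 ≤ i → i ≤ N → (∀ j < i, b j = 0) → b i ≤ 0) := by
  constructor
  · intro h i hi1 hiN hz
    have h0 : b 0 ≤ 0 := le_of_eq (hz 0 hi1)
    rcases h h0 with ⟨k, hkN, hkz, hk⟩ | hall
    · rcases lt_trichotomy k i with hlt | rfl | hgt
      · exact absurd (hz k hlt) (ne_of_lt hk)
      · exact le_of_lt hk
      · exact le_of_eq (hkz i hgt)
    · exact le_of_eq (hall i hiN)
  · intro h h0
    rcases lt_or_eq_of_le h0 with h0' | h0'
    · exact Or.inl ⟨0, Nat.zero_le N, fun j hj => absurd hj (Nat.not_lt_zero j), h0'⟩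
    by_cases hall : ∀ i ≤ N, b i = 0
    · exact Or.inr hall
    · push_neg at hall
      have hex : ∃ i, i ≤ N ∧ b i ≠ 0 := hall
      classical
      let i := Nat.find hex
      obtain ⟨hiN, hne⟩ := Nat.find_spec hex
      have hz : ∀ j < i, b j = 0 := by
        intro j hj
        by_contra hc
        exact Nat.find_min hex hj ⟨le_trans (le_of_lt hj) hiN, hc⟩
      have hi1 : 1 ≤ i := by
        rcases Nat.eq_zero_or_pos i with h' | h'
        · exact absurd (show b i = 0 by rw [h']; exact h0') hne
        · exact h'
      have := h i hi1 hiN hz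
      exact Or.inl ⟨i, hiN, hz, lt_of_le_of_ne this hne⟩
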